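/- The reduced pointed Σ-labelled rooted trees, equipped with pointed tree concatenation ∘, the domain operation D, and the constant given by the trivial tree, form the free algebra over Σ for the class of {∘, 1, D}-algebras of binary relations: for every set X, every set A of binary relations on X containing the identity relation and closed under relation composition and the domain operation, and every map g from Σ to A, there is a unique map h from the reduced pointed Σ-labelled rooted trees to A such that h(→a) = g(a) for all a ∈ Σ, h(trivial tree) = identity relation, h(T∘S) = h(T) composed with h(S), and h(D(T)) = domain of h(T). -/

import Mathlib

/-! A tree `T` denotes, in `(X, g)`, the relation `treeRel g T` of pairs `(x, y)` such that some
homomorphism of `T` into the labelled graph `(X, g)` sends the root to `x` and the point to `y`.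
Grafting composes these relations and moving the point to the root takes their domain; reduction
and `eqv` do not change them, since a child dropped by `reduce` lies above a kept sibling with the
same label, whose image can be reused. So `treeRel g` is a morphism. Conversely, by induction on
size, every reduced pointed tree is built up to `eqv` from arrows and the trivial tree by `∘` and
`D`: this puts every `treeRel g T` in `A` and forces any other morphism to agree with it. -/

inductive PreTree (α : Type) : Type
  | node : Bool → List (α × PreTree α) → PreTree α

namespace PreTree

variable {α : Type}

def mark : PreTree α → Bool
  | node b _ => b

def children : PreTree α → List (α × PreTree α)
  | node _ cs => cs

def le : PreTree α → PreTree α → Prop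
  | node b₁ c₁, node b₂ c₂ =>
      (b₂ = true → b₁ = true) ∧
      ∀ q, q ∈ c₂ → ∃ p, p ∈ c₁ ∧ p.1 = q.1 ∧ le p.2 q.2
termination_by _ t₂ => sizeOf t₂
decreasing_by
  have h := List.sizeOf_lt_of_mem ‹q ∈ c₂›
  obtain ⟨qa, qt⟩ := q
  simp at h ⊢
  omega

-- The reduced form of a tree: reduce all child subtrees, then for each
-- label keep only the `≤`-minimal attached subtrees.
open scoped Classical in
noncomputable def reduce : PreTree α → PreTree α
  | node b cs =>
      let cs' : List (α × PreTree α) := cs.attach.map fun p => (p.1.1, reduce p.1.2)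
      node b (cs'.filter fun q =>
        decide (∀ q' ∈ cs', q'.1 = q.1 → le q'.2 q.2 → le q.2 q'.2))
termination_by t => sizeOf t
decreasing_by
  have h := List.sizeOf_lt_of_mem p.2
  obtain ⟨⟨pa, pt⟩, hp⟩ := p
  simp at h ⊢
  omega

/-- A tree is reduced if it equals its reduced form. -/
def Reduced (T : PreTree α) : Prop := reduce T = T

/-- The number of marked (point) vertices of a tree. -/
def markCount : PreTree α → ℕ
  | node b cs => (cond b 1 0) + (cs.attach.map fun p => markCount p.1.2).sum
termination_by t => sizeOf t
decreasing_by
  have h := List.sizeOf_lt_of_mem p.2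
  obtain ⟨⟨pa, pt⟩, hp⟩ := p
  simp at h ⊢
  omega

/-- A pointed tree: exactly one vertex is marked as the point. -/
def Pointed (T : PreTree α) : Prop := markCount T = 1

/-- Remove all point marks. -/
def unmark : PreTree α → PreTree α
  | node _ cs => node false (cs.attach.map fun p => (p.1.1, unmark p.1.2))
termination_by t => sizeOf t
decreasing_by
  have h := List.sizeOf_lt_of_mem p.2
  obtain ⟨⟨pa, pt⟩, hp⟩ := p
  simp at h ⊢
  omega

/-- Graft the tree `S` onto the point of `T` (identifying the point of `T`
with the root of `S`); the marks of `S` determine the new point. -/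
def graft (S : PreTree α) : PreTree α → PreTree α
  | node b cs =>
      if b then node S.mark (cs ++ S.children)
      else node b (cs.attach.map fun p => (p.1.1, graft S p.1.2))
termination_by t => sizeOf t
decreasing_by
  have h := List.sizeOf_lt_of_mem p.2
  obtain ⟨⟨pa, pt⟩, hp⟩ := p
  simp at h ⊢
  omega

/-- Move the point of `T` to its root. -/
def pointAtRoot (T : PreTree α) : PreTree α := node true (unmark T).children

/-- Pointed tree concatenation `T ∘ S`. -/
noncomputable def concat (T S : PreTree α) : PreTree α := reduce (graft S T)

/-- The domain operation `D(T)` on pointed trees. -/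
noncomputable def domTree (T : PreTree α) : PreTree α := reduce (pointAtRoot T)

/-- The trivial pointed tree: one vertex, both root and point. -/
def trivialTree : PreTree α := node true []

/-- The two-vertex pointed tree with a single `a`-labelled edge, point at the child. -/
def arrow (a : α) : PreTree α := node false [(a, node true [])]


/-- Set-theoretic equality of trees (children lists regarded as sets). -/
def eqv : PreTree α → PreTree α → Prop
  | node b₁ c₁, node b₂ c₂ =>
      b₁ = b₂ ∧
      (∀ p, p ∈ c₁ → ∃ q, q ∈ c₂ ∧ p.1 = q.1 ∧ eqv p.2 q.2) ∧
      (∀ q, q ∈ c₂ → ∃ p : {x // x ∈ c₁}, p.1.1 = q.1 ∧ eqv p.1.2 q.2)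
termination_by t₁ _ => sizeOf t₁
decreasing_by
  · have h₁ := List.sizeOf_lt_of_mem ‹p ∈ c₁›
    obtain ⟨pa, pt⟩ := p
    simp at h₁ ⊢
    omega
  · have h₁ := List.sizeOf_lt_of_mem p.2
    obtain ⟨⟨pa, pt⟩, hp⟩ := p
    simp at h₁ ⊢
    omega


/-- The subtree of `T` at position `p` (a list of child indices), if it exists. -/
def subAt : List ℕ → PreTree α → Option (PreTree α)
  | [], t => some t
  | i :: is, node _ cs => (cs[i]?).bind fun p => subAt is p.2

/-- `p` is a vertex of `T`. -/
def IsVertex (T : PreTree α) (p : List ℕ) : Prop := ∃ t, subAt p T = some t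

/-- The vertex `p` of `T` is the point (is marked). -/
def IsPoint (T : PreTree α) (p : List ℕ) : Prop :=
  ∃ t, subAt p T = some t ∧ t.mark = true

/-- There is an `a`-labelled edge of `T` from vertex `p` (the parent) to
vertex `q` (the child). -/
def Edge (T : PreTree α) (a : α) (p q : List ℕ) : Prop :=
  ∃ c, subAt p T = some c ∧ ∃ i t, c.children[i]? = some (a, t) ∧ q = p ++ [i]

theorem root_isVertex (T : PreTree α) : IsVertex T [] := ⟨T, rfl⟩

/-- A homomorphism of pointed labelled rooted trees from `S` to `T`:
a map of vertices preserving the labelled edge relations, sending the root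
to the root and points to points. -/
def HomTree (S T : PreTree α) : Prop :=
  ∃ θ : List ℕ → List ℕ,
    θ [] = [] ∧
    (∀ p, IsVertex S p → IsVertex T (θ p)) ∧
    (∀ a p q, Edge S a p q → Edge T a (θ p) (θ q)) ∧
    (∀ p, IsPoint S p → IsPoint T (θ p))

/-- A homomorphism of the pointed tree `T`, viewed as a relational structure,
into the relational structure `(X, f)`, mapping the root of `T` to `x` and
the point of `T` to `y`. -/
def HomInto {X : Type} (T : PreTree α) (f : α → X → X → Prop) (x y : X) : Prop :=
  ∃ θ : List ℕ → X,
    θ [] = x ∧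
    (∀ a p q, Edge T a p q → f a (θ p) (θ q)) ∧
    (∀ p, IsPoint T p → θ p = y)


end PreTree

namespace FreeKAD

/-- Terms of the signature `{∘, 1, D}`. -/
inductive Term1 (α : Type) : Type
  | var : α → Term1 α
  | one : Term1 α
  | comp : Term1 α → Term1 α → Term1 α
  | dom : Term1 α → Term1 α

/-- Terms of the signature `{∘, +, *, 0, 1, D}` (Kleene algebra with domain). -/
inductive TermK (α : Type) : Type
  | var : α → TermK α
  | zero : TermK α
  | one : TermK α
  | comp : TermK α → TermK α → TermK α
  | add : TermK α → TermK α → TermK α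
  | star : TermK α → TermK α
  | dom : TermK α → TermK α

variable {α : Type}

/-- The relational interpretation of a `{∘, 1, D}`-term over a set `X`,
under an assignment `f` of binary relations on `X` to the variables. -/
def rinterp1 {X : Type} (f : α → X → X → Prop) : Term1 α → X → X → Prop
  | .var a => f a
  | .one => fun x y => x = y
  | .comp s t => fun x y => ∃ z, rinterp1 f s x z ∧ rinterp1 f t z y
  | .dom s => fun x y => x = y ∧ ∃ z, rinterp1 f s x z

/-- The relational interpretation of a `{∘, +, *, 0, 1, D}`-term over a set `X`,
under an assignment `f` of binary relations on `X` to the variables. -/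
def rinterpK {X : Type} (f : α → X → X → Prop) : TermK α → X → X → Prop
  | .var a => f a
  | .zero => fun _ _ => False
  | .one => fun x y => x = y
  | .comp s t => fun x y => ∃ z, rinterpK f s x z ∧ rinterpK f t z y
  | .add s t => fun x y => rinterpK f s x y ∨ rinterpK f t x y
  | .star s => Relation.ReflTransGen (rinterpK f s)
  | .dom s => fun x y => x = y ∧ ∃ z, rinterpK f s x z

/-- Composition of binary relations. -/
def relComp {X : Type} (R S : X → X → Prop) : X → X → Prop :=
  fun x y => ∃ z, R x z ∧ S z y

/-- Union of binary relations. -/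
def relUnion {X : Type} (R S : X → X → Prop) : X → X → Prop :=
  fun x y => R x y ∨ S x y

/-- The domain operation on binary relations. -/
def relDom {X : Type} (R : X → X → Prop) : X → X → Prop :=
  fun x y => x = y ∧ ∃ z, R x z

/-- The identity relation. -/
def relId {X : Type} : X → X → Prop := fun x y => x = y

/-- The empty relation. -/
def relEmpty {X : Type} : X → X → Prop := fun _ _ => False

end FreeKAD

namespace FreeKAD

open PreTree

variable {α : Type}

/-- The single-tree interpretation of `{∘, 1, D}`-terms. -/
noncomputable def interp1 : Term1 α → PreTree α
  | .var a => arrow a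
  | .one => trivialTree
  | .comp s t => concat (interp1 s) (interp1 t)
  | .dom s => domTree (interp1 s)

/-- The set of `≤`-maximal elements of a set of trees. -/
def maximalSet (K : Set (PreTree α)) : Set (PreTree α) :=
  {T | T ∈ K ∧ ∀ S ∈ K, le T S → le S T}

/-- Elementwise lifting of pointed tree concatenation to sets of trees. -/
def liftComp (K L : Set (PreTree α)) : Set (PreTree α) :=
  {U | ∃ T ∈ K, ∃ S ∈ L, U = concat T S}

/-- Elementwise lifting of the domain operation to sets of trees. -/
def liftDom (K : Set (PreTree α)) : Set (PreTree α) :=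
  {U | ∃ T ∈ K, U = domTree T}

/-- Iterated lifted concatenation: `K^0 = {trivial}`, `K^(i+1) = K^i ∘ K`. -/
def powC (K : Set (PreTree α)) : ℕ → Set (PreTree α)
  | 0 => {trivialTree}
  | i + 1 => liftComp (powC K i) K

/-- The standard tree interpretation of `{∘, +, *, 0, 1, D}`-terms. -/
def sinterp : TermK α → Set (PreTree α)
  | .var a => {arrow a}
  | .zero => ∅
  | .one => {trivialTree}
  | .comp s t => maximalSet (liftComp (sinterp s) (sinterp t))
  | .add s t => maximalSet (sinterp s ∪ sinterp t)
  | .star s => maximalSet (⋃ i : ℕ, powC (sinterp s) (i + 1))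
  | .dom s => maximalSet (liftDom (sinterp s))

/-- Equality of sets of trees, with trees compared as (hereditarily finite) sets. -/
def SetEqv (K L : Set (PreTree α)) : Prop :=
  (∀ T ∈ K, ∃ S ∈ L, eqv T S) ∧ (∀ S ∈ L, ∃ T ∈ K, eqv T S)

/-- A set of reduced pointed trees is regular if it is the standard tree
interpretation of some `{∘, +, *, 0, 1, D}`-term. -/
def Regular (L : Set (PreTree α)) : Prop := ∃ t : TermK α, L = sinterp t

/-- The set of reduced trees lying `≤`-below some member of `L`. -/
def down (L : Set (PreTree α)) : Set (PreTree α) :=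
  {T | Reduced T ∧ ∃ S ∈ L, le T S}

end FreeKAD

namespace FreeKAD
open PreTree

/-- Reduced pointed `Σ`-labelled rooted trees. -/
def RPTree (α : Type) : Type := {T : PreTree α // T.Reduced ∧ T.Pointed}

end FreeKAD

theorem List.exists_split_of_sum_map_eq_one {β : Type*} {w : β → ℕ} :
    ∀ {l : List β}, (l.map w).sum = 1 →
      ∃ l₁ p l₂, l = l₁ ++ p :: l₂ ∧ w p = 1 ∧ ∀ x ∈ l₁ ++ l₂, w x = 0
  | [], h => by simp at h
  | a :: t, h => by
    rw [List.map_cons, List.sum_cons] at h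
    rcases Nat.add_eq_one_iff.mp h with ⟨ha, ht⟩ | ⟨ha, ht⟩
    · obtain ⟨l₁, p, l₂, rfl, hp, hrest⟩ := exists_split_of_sum_map_eq_one ht
      refine ⟨a :: l₁, p, l₂, rfl, hp, ?_⟩
      simpa [ha] using hrest
    · refine ⟨[], a, t, rfl, ha, ?_⟩
      simpa [List.sum_eq_zero_iff] using ht

theorem List.sizeOf_append_lt_sizeOf_append_cons {β : Type*} [SizeOf β] (l₁ l₂ : List β) (p : β) :
    sizeOf (l₁ ++ l₂) < sizeOf (l₁ ++ p :: l₂) := by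
  induction l₁ <;> simp_all

namespace PreTree

variable {α : Type}

theorem nestedInduction {motive : PreTree α → Prop}
    (node : ∀ b cs, (∀ p ∈ cs, motive p.2) → motive (node b cs)) : ∀ t, motive t
  | .node b cs => node b cs fun p _ => nestedInduction node p.2
termination_by t => sizeOf t
decreasing_by
  have h := List.sizeOf_lt_of_mem ‹p ∈ cs›
  obtain ⟨pa, pt⟩ := p
  simp at h ⊢
  omega

theorem le_refl (t : PreTree α) : le t t := by
  induction t using nestedInduction with
  | node b cs ih =>
    rw [le]
    exact ⟨id, fun q hq => ⟨q, hq, rfl, ih q hq⟩⟩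

theorem le_trans {t u v : PreTree α} : le t u → le u v → le t v := by
  induction v using nestedInduction generalizing t u with
  | node b cs ih =>
    obtain ⟨b₁, c₁⟩ := t
    obtain ⟨b₂, c₂⟩ := u
    rw [le, le, le]
    rintro ⟨hm₁, hc₁⟩ ⟨hm₂, hc₂⟩
    refine ⟨hm₁ ∘ hm₂, fun q hq => ?_⟩
    obtain ⟨p, hp, hl, hle⟩ := hc₂ q hq
    obtain ⟨r, hr, hl', hle'⟩ := hc₁ p hp
    exact ⟨r, hr, hl'.trans hl, ih q hq hle' hle⟩

instance : Preorder (PreTree α) where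
  le := le
  le_refl := PreTree.le_refl
  le_trans _ _ _ := PreTree.le_trans

theorem eqv_refl (t : PreTree α) : eqv t t := by
  induction t using nestedInduction with
  | node b cs ih =>
    rw [eqv]
    exact ⟨rfl, fun p hp => ⟨p, hp, rfl, ih p hp⟩, fun q hq => ⟨⟨q, hq⟩, rfl, ih q hq⟩⟩

theorem eqv_node_of_mem_iff {b : Bool} {c₁ c₂ : List (α × PreTree α)}
    (h : ∀ x, x ∈ c₁ ↔ x ∈ c₂) : eqv (node b c₁) (node b c₂) := by
  rw [eqv]
  exact ⟨rfl, fun p hp => ⟨p, (h p).1 hp, rfl, eqv_refl _⟩,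
    fun q hq => ⟨⟨q, (h q).2 hq⟩, rfl, eqv_refl _⟩⟩

theorem markCount_node (b : Bool) (cs : List (α × PreTree α)) :
    markCount (node b cs) = cond b 1 0 + (cs.map fun p => markCount p.2).sum := by
  rw [markCount, ← List.attach_map_val (l := cs) (f := fun p => markCount p.2)]

theorem unmark_node (b : Bool) (cs : List (α × PreTree α)) :
    unmark (node b cs) = node false (cs.map fun p => (p.1, unmark p.2)) := by
  rw [unmark, ← List.attach_map_val (l := cs) (f := fun p => (p.1, unmark p.2))]

theorem graft_node_true (S : PreTree α) (cs : List (α × PreTree α)) :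
    graft S (node true cs) = node S.mark (cs ++ S.children) := by
  rw [graft, if_pos rfl]

theorem graft_node_false (S : PreTree α) (cs : List (α × PreTree α)) :
    graft S (node false cs) = node false (cs.map fun p => (p.1, graft S p.2)) := by
  rw [graft, if_neg Bool.false_ne_true,
    ← List.attach_map_val (l := cs) (f := fun p => (p.1, graft S p.2))]

/-- The condition by which `reduce` keeps a child. -/
def MinimalIn (cs : List (α × PreTree α)) (q : α × PreTree α) : Prop :=
  ∀ q' ∈ cs, q'.1 = q.1 → le q'.2 q.2 → le q.2 q'.2

open scoped Classical in
theorem reduce_node (b : Bool) (cs : List (α × PreTree α)) :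
    reduce (node b cs) = node b ((cs.map fun p => (p.1, reduce p.2)).filter
      fun q => decide (MinimalIn (cs.map fun p => (p.1, reduce p.2)) q)) := by
  rw [reduce, ← List.attach_map_val (l := cs) (f := fun p => (p.1, reduce p.2))]
  exact congrArg _ (List.filter_congr fun q _ => decide_eq_decide.mpr Iff.rfl)

theorem sum_markCount_eq_zero_iff {cs : List (α × PreTree α)} :
    (cs.map fun p => markCount p.2).sum = 0 ↔ ∀ p ∈ cs, markCount p.2 = 0 := by
  rw [List.sum_eq_zero_iff, List.forall_mem_map]

theorem markCount_node_eq_zero_iff {b : Bool} {cs : List (α × PreTree α)} :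
    markCount (node b cs) = 0 ↔ b = false ∧ ∀ p ∈ cs, markCount p.2 = 0 := by
  rw [markCount_node, Nat.add_eq_zero_iff, sum_markCount_eq_zero_iff]
  cases b <;> simp

theorem pointed_node_true_iff {cs : List (α × PreTree α)} :
    Pointed (node true cs) ↔ ∀ p ∈ cs, markCount p.2 = 0 := by
  rw [Pointed, markCount_node, cond_true, Nat.add_eq_left, sum_markCount_eq_zero_iff]

theorem exists_split_of_pointed_node_false {cs : List (α × PreTree α)}
    (h : Pointed (node false cs)) :
    ∃ l₁ p l₂, cs = l₁ ++ p :: l₂ ∧ Pointed p.2 ∧ ∀ x ∈ l₁ ++ l₂, markCount x.2 = 0 := by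
  rw [Pointed, markCount_node, cond_false, Nat.zero_add] at h
  exact List.exists_split_of_sum_map_eq_one h

theorem pointed_node_false_split_iff {l₁ l₂ : List (α × PreTree α)} {a : α} {t : PreTree α}
    (hl : ∀ x ∈ l₁ ++ l₂, markCount x.2 = 0) :
    Pointed (node false (l₁ ++ (a, t) :: l₂)) ↔ Pointed t := by
  rw [List.forall_mem_append, ← sum_markCount_eq_zero_iff, ← sum_markCount_eq_zero_iff] at hl
  rw [Pointed, Pointed, markCount_node, List.map_append, List.map_cons, List.sum_append,
    List.sum_cons, hl.1, hl.2]
  simp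

theorem unmark_eq_self {t : PreTree α} (h : markCount t = 0) : unmark t = t := by
  induction t using nestedInduction with
  | node b cs ih =>
    obtain ⟨rfl, hcs⟩ := markCount_node_eq_zero_iff.mp h
    rw [unmark_node]
    congr 1
    exact (List.map_congr_left fun p hp => by rw [ih p hp (hcs p hp)]).trans (List.map_id' cs)

theorem map_unmark_eq_self {cs : List (α × PreTree α)} (h : ∀ p ∈ cs, markCount p.2 = 0) :
    cs.map (fun p => (p.1, unmark p.2)) = cs :=
  (List.map_congr_left fun p hp => by rw [unmark_eq_self (h p hp)]).trans (List.map_id' cs)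

theorem graft_eq_self (S : PreTree α) {t : PreTree α} (h : markCount t = 0) : graft S t = t := by
  induction t using nestedInduction with
  | node b cs ih =>
    obtain ⟨rfl, hcs⟩ := markCount_node_eq_zero_iff.mp h
    rw [graft_node_false]
    congr 1
    exact (List.map_congr_left fun p hp => by rw [ih p hp (hcs p hp)]).trans (List.map_id' cs)

theorem map_graft_eq_self (S : PreTree α) {cs : List (α × PreTree α)}
    (h : ∀ p ∈ cs, markCount p.2 = 0) : cs.map (fun p => (p.1, graft S p.2)) = cs :=
  (List.map_congr_left fun p hp => by rw [graft_eq_self S (h p hp)]).trans (List.map_id' cs)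

theorem graft_trivialTree (S : PreTree α) : graft S trivialTree = S := by
  obtain ⟨b, cs⟩ := S
  rw [trivialTree, graft_node_true]
  rfl

theorem MinimalIn.mono {l l' : List (α × PreTree α)} (hsub : l' ⊆ l) {q : α × PreTree α}
    (h : MinimalIn l q) : MinimalIn l' q :=
  fun q' hq' => h q' (hsub hq')

theorem exists_le_minimalIn {l : List (α × PreTree α)} {p : α × PreTree α} (hp : p ∈ l) :
    ∃ q ∈ l, q.1 = p.1 ∧ le q.2 p.2 ∧ MinimalIn l q := by
  have hfin : {t | (p.1, t) ∈ l}.Finite :=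
    ((List.finite_toSet l).image Prod.snd).subset fun t ht => ⟨_, ht, rfl⟩
  obtain ⟨t, htp, htmin⟩ := hfin.isPWO.exists_le_minimal (a := p.2) hp
  exact ⟨(p.1, t), htmin.1, rfl, htp, fun q' hq' hlabel hle => htmin.2 (hlabel ▸ hq') hle⟩

theorem map_reduce_eq_self {cs : List (α × PreTree α)} (h : ∀ p ∈ cs, Reduced p.2) :
    cs.map (fun p => (p.1, reduce p.2)) = cs :=
  (List.map_congr_left fun p hp => by rw [h p hp]).trans (List.map_id' cs)

theorem reduce_reduce (t : PreTree α) : reduce (reduce t) = reduce t := by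
  classical
  induction t using nestedInduction with
  | node b cs ih =>
    set L := cs.map fun p => (p.1, reduce p.2)
    set K := L.filter fun q => decide (MinimalIn L q)
    have hKL : K ⊆ L := List.filter_sublist.subset
    have hK : ∀ q ∈ K, Reduced q.2 := fun q hq => by
      obtain ⟨p, hp, rfl⟩ := List.mem_map.mp (hKL hq)
      exact ih p hp
    rw [reduce_node, reduce_node, map_reduce_eq_self hK, List.filter_eq_self.mpr]
    exact fun q hq => decide_eq_true
      ((of_decide_eq_true (List.mem_filter.mp hq).2 : MinimalIn L q).mono hKL)

theorem reduced_node_iff {b : Bool} {cs : List (α × PreTree α)} :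
    Reduced (node b cs) ↔ (∀ p ∈ cs, Reduced p.2) ∧ ∀ q ∈ cs, MinimalIn cs q := by
  classical
  constructor
  · intro h
    have hcs : ((cs.map fun p => (p.1, reduce p.2)).filter
        fun q => decide (MinimalIn (cs.map fun p => (p.1, reduce p.2)) q)) = cs := by
      rw [Reduced, reduce_node] at h
      injection h
    have hred : ∀ p ∈ cs, Reduced p.2 := fun p hp => by
      rw [← hcs] at hp
      obtain ⟨q, _, rfl⟩ := List.mem_map.mp (List.mem_filter.mp hp).1
      exact reduce_reduce q.2
    rw [map_reduce_eq_self hred] at hcs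
    refine ⟨hred, fun q hq => ?_⟩
    rw [← hcs] at hq
    exact of_decide_eq_true (List.mem_filter.mp hq).2
  · rintro ⟨hred, hmin⟩
    rw [Reduced, reduce_node, map_reduce_eq_self hred,
      List.filter_eq_self.mpr fun q hq => decide_eq_true (hmin q hq)]

theorem Reduced.of_subset {b b' : Bool} {cs cs' : List (α × PreTree α)}
    (h : Reduced (node b cs)) (hsub : cs' ⊆ cs) : Reduced (node b' cs') := by
  obtain ⟨hred, hmin⟩ := reduced_node_iff.mp h
  exact reduced_node_iff.mpr ⟨fun p hp => hred p (hsub hp),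
    fun q hq => (hmin q (hsub hq)).mono hsub⟩

theorem reduced_nil (b : Bool) : Reduced (node b ([] : List (α × PreTree α))) :=
  reduced_node_iff.mpr ⟨nofun, nofun⟩

theorem reduced_singleton (b : Bool) (a : α) {c : PreTree α} (hc : Reduced c) :
    Reduced (node b [(a, c)]) := by
  refine reduced_node_iff.mpr ⟨by simpa using hc, ?_⟩
  intro q hq q' hq' _ hle
  rw [List.mem_singleton] at hq hq'
  subst hq hq'
  exact hle

theorem reduced_arrow (a : α) : Reduced (arrow a) :=
  reduced_singleton false a (reduced_nil true)

theorem pointed_arrow (a : α) : Pointed (arrow a) := by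
  simp [arrow, Pointed, markCount_node]

theorem pointed_trivialTree : Pointed (trivialTree : PreTree α) :=
  pointed_node_true_iff.mpr nofun

theorem le_trivialTree_iff {t : PreTree α} : le t trivialTree ↔ t.mark = true := by
  obtain ⟨b, cs⟩ := t
  simp [trivialTree, le, mark]

theorem mark_eq_false_of_markCount_eq_zero {t : PreTree α} (h : markCount t = 0) :
    t.mark = false := by
  obtain ⟨b, cs⟩ := t
  exact (markCount_node_eq_zero_iff.mp h).1

theorem le_node_false_nil (t : PreTree α) : le t (node false []) := by
  obtain ⟨b, cs⟩ := t
  simp [le]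

theorem trivialTree_le_iff {t : PreTree α} : le trivialTree t ↔ t.children = [] := by
  obtain ⟨b, cs⟩ := t
  simp [trivialTree, le, children, List.eq_nil_iff_forall_not_mem]

/-- Only the new, marked leaf lies `le`-below `trivialTree`; an unmarked leaf sibling with label
`a` would lie above every tree, in particular above `c`, and minimality would force `c` to be an
unmarked leaf. -/
theorem Reduced.truncate {l₁ l₂ : List (α × PreTree α)} {a : α} {c : PreTree α}
    (h : Reduced (node false (l₁ ++ (a, c) :: l₂))) (hl : ∀ x ∈ l₁ ++ l₂, markCount x.2 = 0)
    (hc : Pointed c) : Reduced (node false (l₁ ++ (a, trivialTree) :: l₂)) := by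
  obtain ⟨hred, hmin⟩ := reduced_node_iff.mp h
  have hold : l₁ ++ l₂ ⊆ l₁ ++ (a, c) :: l₂ := by intro x; simp; tauto
  have hnew : ∀ x ∈ l₁ ++ (a, trivialTree) :: l₂, x = (a, trivialTree) ∨ x ∈ l₁ ++ l₂ := by
    intro x; simp; tauto
  have hnot_le : ∀ x ∈ l₁ ++ l₂, ¬ le x.2 trivialTree := fun x hx hle => by
    rw [le_trivialTree_iff, mark_eq_false_of_markCount_eq_zero (hl x hx)] at hle
    exact Bool.false_ne_true hle
  have hnot_ge : ∀ x ∈ l₁ ++ l₂, x.1 = a → ¬ le trivialTree x.2 := by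
    intro ⟨a', t⟩ hx hlabel hle
    obtain ⟨b, cs⟩ := t
    obtain ⟨rfl, -⟩ := markCount_node_eq_zero_iff.mp (hl _ hx)
    obtain rfl : cs = [] := trivialTree_le_iff.mp hle
    have hge := hmin _ (hold hx) (a, c) (by simp) hlabel.symm (le_node_false_nil c)
    obtain ⟨cb, ccs⟩ := c
    rw [le] at hge
    obtain rfl : ccs = [] :=
      List.eq_nil_iff_forall_not_mem.mpr fun q hq => by simpa using hge.2 q hq
    cases cb <;> simp_all [Pointed, markCount_node]
  refine reduced_node_iff.mpr ⟨fun p hp => ?_, fun q hq q' hq' hlabel hle => ?_⟩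
  · rcases hnew p hp with rfl | hp
    exacts [reduced_nil true, hred p (hold hp)]
  · rcases hnew q hq with rfl | hq <;> rcases hnew q' hq' with rfl | hq'
    · exact hle
    · exact absurd hle (hnot_le q' hq')
    · exact absurd hle (hnot_ge q hq hlabel.symm)
    · exact hmin q (hold hq) q' (hold hq') hlabel hle

section HasHom

variable {X : Type}

/-- `HasHom f t x P`: some homomorphism of `t` into the labelled graph `(X, f)` sends the root
to `x` and every marked vertex into `P`. -/
def HasHom (f : α → X → X → Prop) : PreTree α → X → (X → Prop) → Prop
  | node b cs, x, P => (b = true → P x) ∧ ∀ p ∈ cs, ∃ z, f p.1 x z ∧ HasHom f p.2 z P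
termination_by t _ _ => sizeOf t
decreasing_by
  have h := List.sizeOf_lt_of_mem ‹p ∈ cs›
  obtain ⟨pa, pt⟩ := p
  simp at h ⊢
  omega

variable {f : α → X → X → Prop}

theorem hasHom_node {b : Bool} {cs : List (α × PreTree α)} {x : X} {P : X → Prop} :
    HasHom f (node b cs) x P ↔ (b = true → P x) ∧ ∀ p ∈ cs, ∃ z, f p.1 x z ∧ HasHom f p.2 z P := by
  rw [HasHom]

theorem HasHom.of_markCount_eq_zero {t : PreTree α} (ht : markCount t = 0) {x : X}
    {P Q : X → Prop} (h : HasHom f t x P) : HasHom f t x Q := by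
  induction t using nestedInduction generalizing x with
  | node b cs ih =>
    obtain ⟨rfl, hcs⟩ := markCount_node_eq_zero_iff.mp ht
    rw [hasHom_node] at h ⊢
    refine ⟨nofun, fun p hp => ?_⟩
    obtain ⟨z, hz, hp'⟩ := h.2 p hp
    exact ⟨z, hz, ih p hp (hcs p hp) hp'⟩

theorem HasHom.of_le {s t : PreTree α} (hle : le s t) {x : X} {P : X → Prop}
    (h : HasHom f s x P) : HasHom f t x P := by
  induction t using nestedInduction generalizing s x with
  | node b cs ih =>
    obtain ⟨b₁, c₁⟩ := s
    rw [le] at hle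
    obtain ⟨hb, hcs⟩ := hle
    rw [hasHom_node] at h ⊢
    refine ⟨fun hbt => h.1 (hb hbt), fun q hq => ?_⟩
    obtain ⟨p, hp, hlabel, hpq⟩ := hcs q hq
    obtain ⟨z, hz, hp'⟩ := h.2 p hp
    exact ⟨z, hlabel ▸ hz, ih q hq hpq hp'⟩

theorem hasHom_reduce {t : PreTree α} {x : X} {P : X → Prop} :
    HasHom f (reduce t) x P ↔ HasHom f t x P := by
  classical
  induction t using nestedInduction generalizing x with
  | node b cs ih =>
    rw [reduce_node, hasHom_node, hasHom_node]
    refine and_congr_right fun _ => ⟨fun h p hp => ?_, fun h q hq => ?_⟩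
    · obtain ⟨q, hq, hlabel, hle, hmin⟩ :=
        exists_le_minimalIn (List.mem_map_of_mem (f := fun p => (p.1, reduce p.2)) hp)
      obtain ⟨z, hz, hq'⟩ := h q (List.mem_filter.mpr ⟨hq, decide_eq_true hmin⟩)
      exact ⟨z, hlabel ▸ hz, ih p hp |>.mp (hq'.of_le hle)⟩
    · obtain ⟨p, hp, rfl⟩ := List.mem_map.mp (List.mem_filter.mp hq).1
      obtain ⟨z, hz, hp'⟩ := h p hp
      exact ⟨z, hz, (ih p hp).mpr hp'⟩

theorem hasHom_congr_of_eqv {s t : PreTree α} (he : eqv s t) {x : X} {P : X → Prop} :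
    HasHom f s x P ↔ HasHom f t x P := by
  induction s using nestedInduction generalizing t x with
  | node b cs ih =>
    obtain ⟨b₂, c₂⟩ := t
    rw [eqv] at he
    obtain ⟨rfl, hfwd, hbwd⟩ := he
    rw [hasHom_node, hasHom_node]
    refine and_congr_right fun _ => ⟨fun h q hq => ?_, fun h p hp => ?_⟩
    · obtain ⟨⟨p, hp⟩, hlabel, hpq⟩ := hbwd q hq
      obtain ⟨z, hz, hp'⟩ := h p hp
      exact ⟨z, hlabel ▸ hz, (ih p hp hpq).mp hp'⟩
    · obtain ⟨q, hq, hlabel, hpq⟩ := hfwd p hp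
      obtain ⟨z, hz, hq'⟩ := h q hq
      exact ⟨z, hlabel ▸ hz, (ih p hp hpq).mpr hq'⟩

theorem hasHom_congr_of_markCount_eq_zero {t : PreTree α} (ht : markCount t = 0) {x : X}
    {P Q : X → Prop} : HasHom f t x P ↔ HasHom f t x Q :=
  ⟨HasHom.of_markCount_eq_zero ht, HasHom.of_markCount_eq_zero ht⟩

theorem forall_hasHom_congr_of_markCount_eq_zero {cs : List (α × PreTree α)}
    (hcs : ∀ p ∈ cs, markCount p.2 = 0) {x : X} {P Q : X → Prop} :
    (∀ p ∈ cs, ∃ z, f p.1 x z ∧ HasHom f p.2 z P) ↔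
      ∀ p ∈ cs, ∃ z, f p.1 x z ∧ HasHom f p.2 z Q :=
  forall₂_congr fun p hp => exists_congr fun _ =>
    and_congr_right' (hasHom_congr_of_markCount_eq_zero (hcs p hp))

theorem hasHom_graft (S : PreTree α) {t : PreTree α} (ht : markCount t ≤ 1) {x : X}
    {P : X → Prop} : HasHom f (graft S t) x P ↔ HasHom f t x (fun z => HasHom f S z P) := by
  induction t using nestedInduction generalizing x with
  | node b cs ih =>
    rw [markCount_node] at ht
    cases b with
    | true =>
      have hcs : ∀ p ∈ cs, markCount p.2 = 0 := by
        rw [cond_true] at ht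
        exact sum_markCount_eq_zero_iff.mp (by omega)
      obtain ⟨sb, scs⟩ := S
      rw [graft_node_true, hasHom_node, hasHom_node, hasHom_node, List.forall_mem_append,
        forall_hasHom_congr_of_markCount_eq_zero hcs]
      simp only [mark, children]
      tauto
    | false =>
      have hle : ∀ p ∈ cs, markCount p.2 ≤ 1 := fun p hp =>
        (List.le_sum_of_mem (List.mem_map_of_mem hp)).trans (by simpa using ht)
      rw [graft_node_false, hasHom_node, hasHom_node, List.forall_mem_map]
      simp only [Bool.false_eq_true, false_imp_iff, true_and]
      exact forall₂_congr fun p hp => exists_congr fun _ => and_congr_right' (ih p hp (hle p hp))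

theorem hasHom_iff_exists_point {t : PreTree α} (ht : Pointed t) {x : X} {P : X → Prop} :
    HasHom f t x P ↔ ∃ z, HasHom f t x (· = z) ∧ P z := by
  induction t using nestedInduction generalizing x with
  | node b cs ih =>
    cases b with
    | true =>
      rw [hasHom_node, forall_hasHom_congr_of_markCount_eq_zero (pointed_node_true_iff.mp ht)
        (Q := (· = x))]
      simp only [hasHom_node, forall_const]
      constructor
      · rintro ⟨hx, hcs⟩
        exact ⟨x, ⟨rfl, hcs⟩, hx⟩
      · rintro ⟨z, ⟨rfl, hcs⟩, hz⟩
        exact ⟨hz, hcs⟩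
    | false =>
      obtain ⟨l₁, ⟨a, c⟩, l₂, rfl, hc, hl⟩ := exists_split_of_pointed_node_false ht
      obtain ⟨hl₁, hl₂⟩ := List.forall_mem_append.mp hl
      have ihc := fun z => ih (a, c) (by simp) hc (x := z)
      simp only [hasHom_node, Bool.false_eq_true, false_imp_iff, true_and,
        List.forall_mem_append, List.forall_mem_cons, ihc,
        forall_hasHom_congr_of_markCount_eq_zero hl₁ (Q := fun _ => True),
        forall_hasHom_congr_of_markCount_eq_zero hl₂ (Q := fun _ => True)]
      constructor
      · rintro ⟨h₁, ⟨z, hz, w, hw, hPw⟩, h₂⟩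
        exact ⟨w, ⟨h₁, ⟨z, hz, hw⟩, h₂⟩, hPw⟩
      · rintro ⟨w, ⟨h₁, ⟨z, hz, hw⟩, h₂⟩, hPw⟩
        exact ⟨h₁, ⟨z, hz, w, hw, hPw⟩, h₂⟩

theorem hasHom_unmark {t : PreTree α} {x : X} {P : X → Prop} :
    HasHom f (unmark t) x P ↔ HasHom f t x (fun _ => True) := by
  induction t using nestedInduction generalizing x with
  | node b cs ih =>
    rw [unmark_node, hasHom_node, hasHom_node, List.forall_mem_map]
    simp only [Bool.false_eq_true, false_imp_iff, imp_true_iff, true_and]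
    exact forall₂_congr fun p hp => exists_congr fun _ => and_congr_right' (ih p hp)

theorem hasHom_pointAtRoot {t : PreTree α} (ht : Pointed t) {x : X} {P : X → Prop} :
    HasHom f (pointAtRoot t) x P ↔ P x ∧ ∃ z, HasHom f t x (· = z) := by
  have hunmark : HasHom f (unmark t) x P ↔
      ∀ p ∈ (unmark t).children, ∃ z, f p.1 x z ∧ HasHom f p.2 z P := by
    obtain ⟨b, cs⟩ := t
    rw [unmark_node, hasHom_node]
    simp [children]
  rw [pointAtRoot, hasHom_node, ← hunmark, hasHom_unmark, hasHom_iff_exists_point ht]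
  simp

theorem hasHom_trivialTree {x : X} {P : X → Prop} : HasHom f trivialTree x P ↔ P x := by
  simp [trivialTree, hasHom_node]

theorem hasHom_arrow {a : α} {x : X} {P : X → Prop} :
    HasHom f (arrow a) x P ↔ ∃ z, f a x z ∧ P z := by
  simp [arrow, hasHom_node]

end HasHom

end PreTree

namespace FreeKAD

open PreTree

variable {α X : Type}

def treeRel (f : α → X → X → Prop) (T : PreTree α) : X → X → Prop :=
  fun x y => HasHom f T x (· = y)

variable {f : α → X → X → Prop}

theorem treeRel_congr_of_eqv {T U : PreTree α} (h : eqv T U) : treeRel f T = treeRel f U := by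
  funext x y
  exact propext (hasHom_congr_of_eqv h)

theorem treeRel_arrow (a : α) : treeRel f (arrow a) = f a := by
  funext x y
  simp [treeRel, hasHom_arrow]

theorem treeRel_trivialTree : treeRel f trivialTree = relId := by
  funext x y
  exact propext hasHom_trivialTree

theorem treeRel_concat {T : PreTree α} (hT : Pointed T) (S : PreTree α) :
    treeRel f (concat T S) = relComp (treeRel f T) (treeRel f S) := by
  funext x y
  rw [treeRel, concat, hasHom_reduce, hasHom_graft S hT.le, hasHom_iff_exists_point hT]
  rfl

theorem treeRel_domTree {T : PreTree α} (hT : Pointed T) :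
    treeRel f (domTree T) = relDom (treeRel f T) := by
  funext x y
  rw [treeRel, domTree, hasHom_reduce, hasHom_pointAtRoot hT]
  rfl

inductive Generated : PreTree α → Prop
  | arrow (a : α) {U : PreTree α} : eqv U (arrow a) → Generated U
  | trivial {U : PreTree α} : eqv U trivialTree → Generated U
  | concat (T S : RPTree α) {U : PreTree α} :
      Generated T.1 → Generated S.1 → eqv U (concat T.1 S.1) → Generated U
  | dom (T : RPTree α) {U : PreTree α} : Generated T.1 → eqv U (domTree T.1) → Generated U

theorem treeRel_mem_of_generated {A : Set (X → X → Prop)} (hid : relId ∈ A)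
    (hcomp : ∀ R ∈ A, ∀ S ∈ A, relComp R S ∈ A) (hdom : ∀ R ∈ A, relDom R ∈ A)
    (hf : ∀ a, f a ∈ A) {U : PreTree α} (hU : Generated U) : treeRel f U ∈ A := by
  induction hU with
  | arrow a h => rw [treeRel_congr_of_eqv h, treeRel_arrow]; exact hf a
  | trivial h => rw [treeRel_congr_of_eqv h, treeRel_trivialTree]; exact hid
  | concat T S _ _ h ihT ihS =>
    rw [treeRel_congr_of_eqv h, treeRel_concat T.2.2]
    exact hcomp _ ihT _ ihS
  | dom T _ h ihT =>
    rw [treeRel_congr_of_eqv h, treeRel_domTree T.2.2]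
    exact hdom _ ihT

theorem eq_treeRel_of_generated {h : RPTree α → X → X → Prop}
    (harrow : ∀ (a : α) (U : RPTree α), eqv U.1 (arrow a) → h U = f a)
    (htrivial : ∀ U : RPTree α, eqv U.1 trivialTree → h U = relId)
    (hcomp : ∀ T S U : RPTree α, eqv U.1 (concat T.1 S.1) → h U = relComp (h T) (h S))
    (hdom : ∀ T U : RPTree α, eqv U.1 (domTree T.1) → h U = relDom (h T))
    {U : PreTree α} (hU : Generated U) (hU' : Reduced U ∧ Pointed U) :
    h ⟨U, hU'⟩ = treeRel f U := by
  induction hU with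
  | arrow a he =>
    calc h _ = f a := harrow a _ he
      _ = treeRel f _ := by rw [treeRel_congr_of_eqv he, treeRel_arrow]
  | trivial he =>
    calc h _ = relId := htrivial _ he
      _ = treeRel f _ := by rw [treeRel_congr_of_eqv he, treeRel_trivialTree]
  | concat T S _ _ he ihT ihS =>
    calc h _ = relComp (h T) (h S) := hcomp T S _ he
      _ = relComp (treeRel f T.1) (treeRel f S.1) := congrArg₂ relComp (ihT T.2) (ihS S.2)
      _ = treeRel f _ := by rw [treeRel_congr_of_eqv he, treeRel_concat T.2.2]
  | dom T _ he ihT =>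
    calc h _ = relDom (h T) := hdom T _ he
      _ = relDom (treeRel f T.1) := congrArg relDom (ihT T.2)
      _ = treeRel f _ := by rw [treeRel_congr_of_eqv he, treeRel_domTree T.2.2]

theorem Generated.graft (T S : RPTree α) (hT : Generated T.1) (hS : Generated S.1)
    (h : Reduced (graft S.1 T.1)) : Generated (graft S.1 T.1) :=
  .concat T S hT hS (by rw [PreTree.concat, h]; exact eqv_refl _)

theorem Generated.pointAtRoot (T : RPTree α) (hT : Generated T.1)
    (h : Reduced (pointAtRoot T.1)) : Generated (pointAtRoot T.1) :=
  .dom T hT (by rw [PreTree.domTree, h]; exact eqv_refl _)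

/-- A marked root with first child `(a, c)`, where `c` is unmarked, is `D(→a ∘ c') ∘ R`, where
`c'` is `c` with its root marked and `R` is the root with the other children. -/
theorem generated_node_true_cons {a : α} {c : PreTree α} {rest : List (α × PreTree α)}
    (ih : ∀ S : PreTree α, sizeOf S < sizeOf (node true ((a, c) :: rest)) →
      Reduced S → Pointed S → Generated S)
    (hred : Reduced (node true ((a, c) :: rest))) (hpt : Pointed (node true ((a, c) :: rest))) :
    Generated (node true ((a, c) :: rest)) := by
  obtain ⟨hredc, -⟩ := reduced_node_iff.mp hred
  have hunmarked := pointed_node_true_iff.mp hpt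
  obtain ⟨cb, cc⟩ := c
  obtain ⟨rfl, hcc⟩ := markCount_node_eq_zero_iff.mp (hunmarked _ List.mem_cons_self)
  have hc : Reduced (node false cc) := hredc _ List.mem_cons_self
  have hCred : Reduced (node true cc) := hc.of_subset (List.Subset.refl _)
  have hCpt : Pointed (node true cc) := pointed_node_true_iff.mpr hcc
  have hW : graft (node true cc) (arrow a) = node false [(a, node true cc)] := by
    rw [arrow, graft_node_false, List.map_singleton, ← trivialTree, graft_trivialTree]
  have hWred : Reduced (node false [(a, node true cc)]) := reduced_singleton false a hCred
  have hWpt : Pointed (node false [(a, node true cc)]) :=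
    (pointed_node_false_split_iff (l₁ := []) (l₂ := []) nofun).mpr hCpt
  have hWgen : Generated (node false [(a, node true cc)]) :=
    hW ▸ Generated.graft ⟨arrow a, reduced_arrow a, pointed_arrow a⟩ ⟨_, hCred, hCpt⟩
      (.arrow a (eqv_refl _)) (ih _ (by simp +arith) hCred hCpt) (hW ▸ hWred)
  have hD : pointAtRoot (node false [(a, node true cc)]) = node true [(a, node false cc)] := by
    rw [pointAtRoot, unmark_node, List.map_singleton, unmark_node, map_unmark_eq_self hcc]
    rfl
  have hDred : Reduced (node true [(a, node false cc)]) := reduced_singleton true a hc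
  have hDpt : Pointed (node true [(a, node false cc)]) :=
    pointed_node_true_iff.mpr (by simpa using hunmarked _ List.mem_cons_self)
  have hDgen : Generated (node true [(a, node false cc)]) :=
    hD ▸ Generated.pointAtRoot ⟨_, hWred, hWpt⟩ hWgen (hD ▸ hDred)
  have hRred : Reduced (node true rest) := hred.of_subset (List.subset_cons_self _ _)
  have hRpt : Pointed (node true rest) :=
    pointed_node_true_iff.mpr fun p hp => hunmarked p (List.mem_cons_of_mem _ hp)
  have hT : graft (node true rest) (node true [(a, node false cc)]) =
      node true ((a, node false cc) :: rest) := by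
    rw [graft_node_true]
    rfl
  exact hT ▸ Generated.graft ⟨_, hDred, hDpt⟩ ⟨_, hRred, hRpt⟩ hDgen
    (ih _ (by simp +arith) hRred hRpt) (hT ▸ hred)

/-- An unmarked root whose child `(a, c)` carries the point is `(R ∘ →a) ∘ c`, where `R` is the
root, marked, with the other children. -/
theorem generated_node_false {cs : List (α × PreTree α)}
    (ih : ∀ S : PreTree α, sizeOf S < sizeOf (node false cs) →
      Reduced S → Pointed S → Generated S)
    (hred : Reduced (node false cs)) (hpt : Pointed (node false cs)) :
    Generated (node false cs) := by
  obtain ⟨l₁, ⟨a, c⟩, l₂, rfl, hc, hl⟩ := exists_split_of_pointed_node_false hpt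
  have hsub : l₁ ++ l₂ ⊆ l₁ ++ (a, c) :: l₂ := by intro x; simp; tauto
  have hRred : Reduced (node true (l₁ ++ l₂)) := hred.of_subset hsub
  have hRpt : Pointed (node true (l₁ ++ l₂)) := pointed_node_true_iff.mpr hl
  have hRgen : Generated (node true (l₁ ++ l₂)) :=
    ih _ (by simpa using List.sizeOf_append_lt_sizeOf_append_cons l₁ l₂ (a, c)) hRred hRpt
  have hT₀red : Reduced (node false (l₁ ++ (a, trivialTree) :: l₂)) := hred.truncate hl hc
  have hT₀pt : Pointed (node false (l₁ ++ (a, trivialTree) :: l₂)) :=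
    (pointed_node_false_split_iff hl).mpr pointed_trivialTree
  have hRA : graft (arrow a) (node true (l₁ ++ l₂)) =
      node false (l₁ ++ l₂ ++ [(a, trivialTree)]) := by
    rw [graft_node_true]
    rfl
  have hRAred : Reduced (node false (l₁ ++ l₂ ++ [(a, trivialTree)])) :=
    hT₀red.of_subset (by intro x; simp; tauto)
  have hT₀gen : Generated (node false (l₁ ++ (a, trivialTree) :: l₂)) :=
    .concat ⟨_, hRred, hRpt⟩ ⟨arrow a, reduced_arrow a, pointed_arrow a⟩ hRgen
      (.arrow a (eqv_refl _))
      (by rw [concat, hRA, hRAred]; exact eqv_node_of_mem_iff (by simp; tauto))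
  have hcred : Reduced c := (reduced_node_iff.mp hred).1 (a, c) (by simp)
  have hT : graft c (node false (l₁ ++ (a, trivialTree) :: l₂)) =
      node false (l₁ ++ (a, c) :: l₂) := by
    rw [List.forall_mem_append] at hl
    rw [graft_node_false, List.map_append, List.map_cons, graft_trivialTree,
      map_graft_eq_self c hl.1, map_graft_eq_self c hl.2]
  have hcsize : sizeOf c < sizeOf (node false (l₁ ++ (a, c) :: l₂)) := by
    have := List.sizeOf_lt_of_mem (show (a, c) ∈ l₁ ++ (a, c) :: l₂ by simp)
    simp at this ⊢
    omega
  exact hT ▸ Generated.graft ⟨_, hT₀red, hT₀pt⟩ ⟨c, hcred, hc⟩ hT₀gen (ih c hcsize hcred hc)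
    (hT ▸ hred)

theorem generated_of_reduced_of_pointed {T : PreTree α} (hred : Reduced T) (hpt : Pointed T) :
    Generated T := by
  induction hn : sizeOf T using Nat.strong_induction_on generalizing T with
  | _ n ih =>
    subst hn
    have ih' : ∀ S : PreTree α, sizeOf S < sizeOf T → Reduced S → Pointed S → Generated S :=
      fun S hS hSred hSpt => ih _ hS hSred hSpt rfl
    obtain ⟨_ | _, cs⟩ := T
    · exact generated_node_false ih' hred hpt
    · cases cs with
      | nil => exact .trivial (eqv_refl _)
      | cons p rest => exact generated_node_true_cons ih' hred hpt

end FreeKAD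

namespace FreeKAD
open PreTree

/-- The reduced pointed `Σ`-labelled rooted trees, with
pointed tree concatenation, the domain operation, and the trivial tree, form
the free algebra over `Σ` for the class of `{∘, 1, D}`-algebras of binary
relations: for every set `X`, every set `A` of binary relations on `X`
containing the identity relation and closed under composition and domain,
and every `g : Σ → A`, there is a unique map `h` from the reduced pointed
trees to `A` with `h(→a) = g a`, `h(trivial) = identity`,
`h(T ∘ S) = h T ∘ h S` and `h(D T) = D(h T)`.  (Trees are compared with
`eqv`, equality of trees whose children collections are sets.) -/
theorem free_algebra_comp_one_dom {α X : Type} (A : Set (X → X → Prop))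
    (hid : relId ∈ A)
    (hcomp : ∀ R ∈ A, ∀ S ∈ A, relComp R S ∈ A)
    (hdom : ∀ R ∈ A, relDom R ∈ A)
    (g : α → X → X → Prop) (hg : ∀ a, g a ∈ A) :
    ∃! h : RPTree α → (X → X → Prop),
      (∀ T, h T ∈ A) ∧
      (∀ (a : α) (U : RPTree α), eqv U.1 (arrow a) → h U = g a) ∧
      (∀ U : RPTree α, eqv U.1 trivialTree → h U = relId) ∧
      (∀ T S U : RPTree α, eqv U.1 (concat T.1 S.1) →
          h U = relComp (h T) (h S)) ∧
      (∀ T U : RPTree α, eqv U.1 (domTree T.1) → h U = relDom (h T)) := by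
  have generated (U : RPTree α) : Generated U.1 := generated_of_reduced_of_pointed U.2.1 U.2.2
  refine ⟨fun U => treeRel g U.1,
    ⟨fun U => treeRel_mem_of_generated hid hcomp hdom hg (generated U),
      fun a U he => (treeRel_congr_of_eqv he).trans (treeRel_arrow a),
      fun U he => (treeRel_congr_of_eqv he).trans treeRel_trivialTree,
      fun T S U he => (treeRel_congr_of_eqv he).trans (treeRel_concat T.2.2 S.1),
      fun T U he => (treeRel_congr_of_eqv he).trans (treeRel_domTree T.2.2)⟩, ?_⟩
  rintro h ⟨-, harrow, htrivial, hcomp', hdom'⟩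
  funext U
  exact eq_treeRel_of_generated harrow htrivial hcomp' hdom' (generated U) U.2
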